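/- arXiv:2511.21170 — 2 statements merged into one kernel-verified Lean document; each statement's English description precedes it below -/
import Mathlib

section
/- If G is a graph that is neither a complete graph K_n nor an edgeless graph on n vertices, then SEC(G) ≥ 3. -/
namespace SecCoal

/-- `D` is a dominating set of `G`. -/
def IsDominating {V : Type*} (G : SimpleGraph V) (D : Set V) : Prop :=
  ∀ v ∉ D, ∃ u ∈ D, G.Adj u v

/-- `S` is a secure dominating set of `G`. -/
def IsSecureDominating {V : Type*} (G : SimpleGraph V) (S : Set V) : Prop :=
  IsDominating G S ∧
    ∀ u ∉ S, ∃ v ∈ S, G.Adj v u ∧ IsDominating G ((S \ {v}) ∪ {u})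

/-- Degree of a vertex. -/
noncomputable def deg {V : Type*} (G : SimpleGraph V) (v : V) : ℕ :=
  (G.neighborSet v).ncard

/-- Minimum degree. -/
noncomputable def minDeg {V : Type*} (G : SimpleGraph V) : ℕ :=
  sInf (Set.range (deg G))

/-- Maximum degree. -/
noncomputable def maxDeg {V : Type*} (G : SimpleGraph V) : ℕ :=
  sSup (Set.range (deg G))

/-- `π` is a secure coalition partition of `G`. -/
def IsSecPartition {V : Type*} (G : SimpleGraph V) (π : Finset (Set V)) : Prop :=
  Setoid.IsPartition (↑π : Set (Set V)) ∧
    ∀ A ∈ π,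
      (∃ v, A = {v} ∧ deg G v = Nat.card V - 1 ∧ IsSecureDominating G A) ∨
      (¬ IsSecureDominating G A ∧
        ∃ B ∈ π, B ≠ A ∧ IsSecureDominating G (A ∪ B))

/-- The secure coalition number of `G`. -/
noncomputable def SEC {V : Type*} (G : SimpleGraph V) : ℕ :=
  sSup {k | ∃ π : Finset (Set V), IsSecPartition G π ∧ π.card = k}

/-- Two disjoint sets form a secure coalition. -/
def FormsSecCoalition {V : Type*} (G : SimpleGraph V) (A B : Set V) : Prop :=
  Disjoint A B ∧ ¬ IsSecureDominating G A ∧ ¬ IsSecureDominating G B ∧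
    IsSecureDominating G (A ∪ B)

/-- The domination number of `G`. -/
noncomputable def gammaDom {V : Type*} (G : SimpleGraph V) : ℕ :=
  sInf {k | ∃ D : Set V, IsDominating G D ∧ D.ncard = k}

/-- The secure domination number of `G`. -/
noncomputable def secDomNum {V : Type*} (G : SimpleGraph V) : ℕ :=
  sInf {k | ∃ S : Set V, IsSecureDominating G S ∧ S.ncard = k}

/-- `π` is a coalition partition (w.r.t. domination) of `G`. -/
def IsCoalitionPartition {V : Type*} (G : SimpleGraph V) (π : Finset (Set V)) : Prop :=
  Setoid.IsPartition (↑π : Set (Set V)) ∧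
    ∀ A ∈ π,
      (∃ v, A = {v} ∧ IsDominating G A) ∨
      (¬ IsDominating G A ∧ ∃ B ∈ π, B ≠ A ∧ IsDominating G (A ∪ B))

/-- The coalition number of `G`. -/
noncomputable def CNum {V : Type*} (G : SimpleGraph V) : ℕ :=
  sSup {k | ∃ π : Finset (Set V), IsCoalitionPartition G π ∧ π.card = k}

/-- The secure coalition graph of `G` w.r.t. a partition `π`. -/
def SCG {V : Type*} (G : SimpleGraph V) (π : Finset (Set V)) :
    SimpleGraph {A : Set V // A ∈ π} where
  Adj A B := FormsSecCoalition G A.1 B.1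
  symm := by
    constructor
    rintro A B ⟨hd, h1, h2, h3⟩
    exact ⟨hd.symm, h2, h1, by rwa [Set.union_comm]⟩
  loopless := by
    constructor
    rintro A ⟨hd, h1, h2, h3⟩
    exact h1 (by simpa using h3)

end SecCoal

/-!
No singleton is a secure dominating set when `G` is not complete, and the set of isolated
vertices is not even dominating when `G` has an edge. Enlarge the isolated vertices to a maximal
set `M` that is not secure dominating; then `M ∪ {u}` is secure dominating for every `u ∉ M`, so
`M` together with the singletons outside `M` is a secure coalition partition. At least two
vertices lie outside `M`, because `V` and `V \ {c}` (for `c` not isolated) are secure dominating.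
-/

namespace SecCoal

variable {V : Type*} {G : SimpleGraph V}

def isolatedVertices (G : SimpleGraph V) : Set V := {v | ∀ w, ¬ G.Adj v w}

lemma isDominating_singleton_iff {x : V} : IsDominating G {x} ↔ ∀ y ≠ x, G.Adj x y := by
  simp [IsDominating]

lemma isDominating_compl_singleton {w z : V} (h : G.Adj w z) : IsDominating G {z}ᶜ := by
  intro v hv
  rw [Set.notMem_compl_iff, Set.mem_singleton_iff] at hv
  subst hv
  exact ⟨w, h.ne, h⟩

lemma isSecureDominating_univ : IsSecureDominating G Set.univ :=
  ⟨fun _ hv => absurd trivial hv, fun _ hu => absurd trivial hu⟩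

/-- Swapping `w` for `z` turns `{z}ᶜ` into `{w}ᶜ`, which `z` dominates. -/
lemma isSecureDominating_compl_singleton {z w : V} (h : G.Adj z w) :
    IsSecureDominating G {z}ᶜ := by
  refine ⟨isDominating_compl_singleton h.symm, fun u hu => ?_⟩
  rw [Set.notMem_compl_iff, Set.mem_singleton_iff] at hu
  subst hu
  have hswap : ({u}ᶜ \ {w}) ∪ {u} = ({w}ᶜ : Set V) := by
    ext x
    by_cases hxu : x = u <;> simp [hxu, h.ne]
  exact ⟨w, h.ne', h.symm, hswap ▸ isDominating_compl_singleton h⟩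

lemma not_isSecureDominating_singleton {p q : V} (hpq : p ≠ q) (hnadj : ¬ G.Adj p q) (x : V) :
    ¬ IsSecureDominating G {x} := by
  rintro ⟨hdom, hsec⟩
  rw [isDominating_singleton_iff] at hdom
  by_cases hxp : x = p
  · subst hxp
    exact hnadj (hdom q hpq.symm)
  by_cases hxq : x = q
  · subst hxq
    exact hnadj (hdom p hpq).symm
  obtain ⟨v, hv, -, hswap⟩ := hsec p (Ne.symm hxp)
  rw [Set.mem_singleton_iff] at hv
  subst hv
  rw [Set.sdiff_self, Set.empty_union, isDominating_singleton_iff] at hswap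
  exact hnadj (hswap q hpq.symm)

lemma not_isDominating_isolatedVertices {a b : V} (hab : G.Adj a b) :
    ¬ IsDominating G (isolatedVertices G) := by
  intro hdom
  obtain ⟨u, hu, hua⟩ := hdom a fun ha => ha b hab
  exact hu a hua

lemma exists_maximal_not_isSecureDominating [Finite V] {S : Set V}
    (hS : ¬ IsSecureDominating G S) :
    ∃ M, S ⊆ M ∧ ¬ IsSecureDominating G M ∧ ∀ u ∉ M, IsSecureDominating G (insert u M) := by
  obtain ⟨M, hSM, hmax⟩ :=
    Finite.exists_le_maximal (p := fun M : Set V => S ⊆ M ∧ ¬ IsSecureDominating G M)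
      ⟨subset_rfl, hS⟩
  refine ⟨M, hSM, hmax.prop.2, fun u hu => by_contra fun h => hu ?_⟩
  exact hmax.le_of_ge ⟨hSM.trans (Set.subset_insert u M), h⟩ (Set.subset_insert u M)
    (Set.mem_insert u M)

lemma one_lt_ncard_compl [Finite V] {M : Set V} (hIM : isolatedVertices G ⊆ M)
    (hM : ¬ IsSecureDominating G M) : 1 < Mᶜ.ncard := by
  by_contra! h
  rcases (Set.ncard_le_one_iff_eq).mp h with h | ⟨c, hc⟩
  · rw [Set.compl_empty_iff] at h
    exact hM (h ▸ isSecureDominating_univ)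
  · have hcM : c ∉ M := by simp [← Set.mem_compl_iff, hc]
    obtain ⟨w, hcw⟩ : ∃ w, G.Adj c w := by
      by_contra! hiso
      exact hcM (hIM hiso)
    rw [← compl_compl M, hc] at hM
    exact hM (isSecureDominating_compl_singleton hcw)

lemma isPartition_insert_image_singleton {M : Set V} (hM : M.Nonempty) :
    Setoid.IsPartition (insert M ((fun c => {c}) '' Mᶜ)) := by
  refine ⟨?_, fun v => ?_⟩
  · rintro (h | ⟨c, -, h⟩)
    · exact hM.ne_empty h.symm
    · exact Set.singleton_ne_empty c h
  by_cases hv : v ∈ M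
  · refine ⟨M, ⟨Set.mem_insert _ _, hv⟩, ?_⟩
    rintro B ⟨rfl | ⟨c, hc, rfl⟩, hvB⟩
    · rfl
    · exact absurd (Set.mem_singleton_iff.mp hvB ▸ hv) hc
  · refine ⟨{v}, ⟨Set.mem_insert_of_mem _ ⟨v, hv, rfl⟩, rfl⟩, ?_⟩
    rintro B ⟨rfl | ⟨c, -, rfl⟩, hvB⟩
    · exact absurd hvB hv
    · rw [Set.mem_singleton_iff.mp hvB]

lemma IsSecPartition.card_le_SEC [Finite V] {π : Finset (Set V)} (h : IsSecPartition G π) :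
    π.card ≤ SEC G := by
  refine le_csSup ⟨Nat.card (Set V), ?_⟩ ⟨π, h, rfl⟩
  rintro _ ⟨π', -, rfl⟩
  simpa using Set.ncard_le_card (π' : Set (Set V))

lemma ncard_compl_add_one_le_SEC [Finite V] {M : Set V} (hMne : M.Nonempty)
    (hM : ¬ IsSecureDominating G M) (hext : ∀ u ∉ M, IsSecureDominating G (insert u M))
    (hsingle : ∀ u, ¬ IsSecureDominating G {u}) : Mᶜ.ncard + 1 ≤ SEC G := by
  set P : Set (Set V) := insert M ((fun c => {c}) '' Mᶜ)
  obtain ⟨c, hc⟩ : ∃ c, c ∉ M := by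
    by_contra! h
    exact hM (Set.eq_univ_of_forall h ▸ isSecureDominating_univ)
  have hMP : M ∉ (fun c => {c}) '' Mᶜ := by
    rintro ⟨d, hd, hdM⟩
    exact hd (hdM ▸ rfl)
  have hπ : IsSecPartition G (Set.toFinite P).toFinset := by
    refine ⟨by simpa using isPartition_insert_image_singleton hMne, fun A hA => Or.inr ?_⟩
    rw [Set.Finite.mem_toFinset] at hA
    rcases hA with rfl | ⟨d, hd, rfl⟩
    · refine ⟨hM, {c}, by simp [P, hc], fun h => hMP ⟨c, hc, h⟩, ?_⟩
      simpa using hext c hc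
    · refine ⟨hsingle d, M, by simp [P], fun h => hMP ⟨d, hd, h.symm⟩, ?_⟩
      simpa using hext d hd
  calc Mᶜ.ncard + 1 = P.ncard := by
        rw [Set.ncard_insert_of_notMem hMP, Set.ncard_image_of_injective _ Set.singleton_injective]
    _ = (Set.toFinite P).toFinset.card := Set.ncard_eq_toFinset_card P
    _ ≤ SEC G := hπ.card_le_SEC

end SecCoal

open SecCoal
theorem stmt2 {V : Type*} [Fintype V] (G : SimpleGraph V)
    (hne1 : G ≠ ⊤) (hne2 : G ≠ ⊥) :
    3 ≤ SEC G := by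
  obtain ⟨p, q, hpq, hnadj⟩ := SimpleGraph.ne_top_iff_exists_not_adj.mp hne1
  obtain ⟨a, b, hab⟩ := SimpleGraph.ne_bot_iff_exists_adj.mp hne2
  have hsingle := not_isSecureDominating_singleton hpq hnadj
  obtain ⟨M, hIM, hM, hext⟩ :=
    exists_maximal_not_isSecureDominating fun h => not_isDominating_isolatedVertices hab h.1
  have hcompl := one_lt_ncard_compl hIM hM
  have hMne : M.Nonempty := by
    obtain ⟨c, hc, -⟩ := (Set.one_lt_ncard).mp hcompl
    rw [Set.nonempty_iff_ne_empty]
    rintro rfl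
    exact hsingle c (by simpa using hext c hc)
  calc 3 ≤ Mᶜ.ncard + 1 := by omega
    _ ≤ SEC G := ncard_compl_add_one_le_SEC hMne hM hext hsingle
end

section
/- For any tree T of order n ≥ 5 with T not isomorphic to the path P₅, SEC(T) ≤ n − 2. -/
open SecCoal SimpleGraph

namespace SimpleGraph

variable {V : Type*} {G : SimpleGraph V}

theorem IsAcyclic.eq_of_isPath (hG : G.IsAcyclic) {u v : V} {p q : G.Walk u v}
    (hp : p.IsPath) (hq : q.IsPath) : p = q :=
  congrArg Subtype.val ((hG.subsingleton_path u v).elim ⟨p, hp⟩ ⟨q, hq⟩)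

theorem IsAcyclic.not_adj_of_isPath (hG : G.IsAcyclic) {u v : V} {p : G.Walk u v}
    (hp : p.IsPath) (hlen : 2 ≤ p.length) : ¬G.Adj u v := fun h => by
  have := congrArg Walk.length (hG.eq_of_isPath hp h.isPath_toWalk)
  simp only [Adj.length_toWalk] at this
  omega

theorem IsAcyclic.not_adj_of_adj_of_adj (hG : G.IsAcyclic) {x y z : V} (hxy : G.Adj x y)
    (hyz : G.Adj y z) : ¬G.Adj x z := fun hxz =>
  hG.not_adj_of_isPath (p := .cons hxy (.cons hyz .nil)) (by simp [hxy.ne, hyz.ne, hxz.ne])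
    (by simp) hxz

theorem IsAcyclic.subsingleton_commonNeighbors (hG : G.IsAcyclic) {u v : V} (huv : u ≠ v) :
    (G.commonNeighbors u v).Subsingleton := by
  intro x hx y hy
  obtain ⟨hux, hvx⟩ := (G.mem_commonNeighbors).mp hx
  obtain ⟨huy, hvy⟩ := (G.mem_commonNeighbors).mp hy
  have := congrArg Walk.support <| hG.eq_of_isPath
    (p := .cons hux (.cons hvx.symm .nil)) (q := .cons huy (.cons hvy.symm .nil))
    (by simp [hux.ne, hvx.ne', huv]) (by simp [huy.ne, hvy.ne', huv])
  simpa using this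

theorem IsAcyclic.nonempty_iso_pathGraph_five [Fintype V] (hG : G.IsAcyclic)
    (hn : 5 ≤ Fintype.card V) {v₀ v₁ v₂ v₃ v₄ : V} (h₀₁ : G.Adj v₀ v₁) (h₁₂ : G.Adj v₁ v₂)
    (h₂₃ : G.Adj v₂ v₃) (h₃₄ : G.Adj v₃ v₄) (hcover : ∀ v, v = v₀ ∨ v = v₁ ∨ v = v₂ ∨ v = v₃ ∨ v = v₄) :
    Nonempty (G ≃g pathGraph 5) := by
  let f : Fin 5 → V := ![v₀, v₁, v₂, v₃, v₄]
  have hsurj : f.Surjective := fun v => by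
    rcases hcover v with rfl | rfl | rfl | rfl | rfl
    exacts [⟨0, rfl⟩, ⟨1, rfl⟩, ⟨2, rfl⟩, ⟨3, rfl⟩, ⟨4, rfl⟩]
  have hbij : f.Bijective := (Fintype.bijective_iff_surjective_and_card f).2
    ⟨hsurj, le_antisymm (by simpa using hn) (Fintype.card_le_of_surjective f hsurj)⟩
  -- `hcover` and `hn` force the five vertices to be distinct
  have hne : ∀ i j : Fin 5, i ≠ j → f i ≠ f j := fun i j => hbij.1.ne
  have h₀₂ := hne 0 2 (by decide); have h₀₃ := hne 0 3 (by decide)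
  have h₀₄ := hne 0 4 (by decide); have h₁₃ := hne 1 3 (by decide)
  have h₁₄ := hne 1 4 (by decide); have h₂₄ := hne 2 4 (by decide)
  simp only [f, Fin.isValue, Matrix.cons_val] at h₀₂ h₀₃ h₀₄ h₁₃ h₁₄ h₂₄
  have n₀₂ := hG.not_adj_of_adj_of_adj h₀₁ h₁₂
  have n₁₃ := hG.not_adj_of_adj_of_adj h₁₂ h₂₃
  have n₂₄ := hG.not_adj_of_adj_of_adj h₂₃ h₃₄
  have n₀₃ := hG.not_adj_of_isPath (p := .cons h₀₁ (.cons h₁₂ (.cons h₂₃ .nil)))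
    (by simp [h₀₁.ne, h₁₂.ne, h₂₃.ne, h₀₂, h₀₃, h₁₃]) (by simp)
  have n₁₄ := hG.not_adj_of_isPath (p := .cons h₁₂ (.cons h₂₃ (.cons h₃₄ .nil)))
    (by simp [h₁₂.ne, h₂₃.ne, h₃₄.ne, h₁₃, h₁₄, h₂₄]) (by simp)
  have n₀₄ := hG.not_adj_of_isPath (p := .cons h₀₁ (.cons h₁₂ (.cons h₂₃ (.cons h₃₄ .nil))))
    (by simp [h₀₁.ne, h₁₂.ne, h₂₃.ne, h₃₄.ne, h₀₂, h₀₃, h₀₄, h₁₃, h₁₄, h₂₄]) (by simp)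
  refine ⟨(⟨Equiv.ofBijective f hbij, fun {i j} => ?_⟩ : pathGraph 5 ≃g G).symm⟩
  fin_cases i <;> fin_cases j <;>
    simp [f, pathGraph_adj, h₀₁, h₁₂, h₂₃, h₃₄, h₀₁.symm, h₁₂.symm, h₂₃.symm, h₃₄.symm,
      n₀₂, n₁₃, n₂₄, n₀₃, n₁₄, n₀₄, mt G.adj_symm n₀₂, mt G.adj_symm n₁₃, mt G.adj_symm n₂₄,
      mt G.adj_symm n₀₃, mt G.adj_symm n₁₄, mt G.adj_symm n₀₄]

end SimpleGraph

namespace SecCoal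

variable {V : Type*} {G : SimpleGraph V} {S : Set V} {a b : V}

theorem IsSecureDominating.exists_defender (hS : IsSecureDominating G S) {u : V} (hu : u ∉ S) :
    ∃ s ∈ S, G.Adj s u ∧
      ∀ y ∉ S, y ≠ u → (∀ t ∈ S, G.Adj t y → t = s) → G.Adj u y := by
  obtain ⟨s, hs, hsu, hdom⟩ := hS.2 u hu
  refine ⟨s, hs, hsu, fun y hy hyu hsole => ?_⟩
  obtain ⟨t, ht, hty⟩ := hdom y (by simp [hy, hyu])
  rcases ht with ⟨htS, hts⟩ | rfl
  · exact absurd (hsole t htS hty) hts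
  · exact hty

theorem IsSecureDominating.eq_of_forall_adj_eq (hG : G.IsAcyclic) (hS : IsSecureDominating G S)
    {s y w : V} (hy : y ∉ S) (hw : w ∉ S) (hys : ∀ t ∈ S, G.Adj t y → t = s)
    (hws : ∀ t ∈ S, G.Adj t w → t = s) : y = w := by
  by_contra hyw
  obtain ⟨s', hs', hs'w, hdefend⟩ := hS.exists_defender hw
  obtain rfl := hws s' hs' hs'w
  obtain ⟨t, ht, hty⟩ := hS.1 y hy
  obtain rfl := hys t ht hty
  exact hG.not_adj_of_adj_of_adj hty.symm hs'w (hdefend y hy hyw hys).symm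

def privNeighborSet (G : SimpleGraph V) (a b : V) : Set V :=
  {x | x ≠ b ∧ G.Adj a x ∧ ¬G.Adj b x}

theorem notMem_pair_of_mem_privNeighborSet {x : V} (hx : x ∈ privNeighborSet G a b) :
    x ∉ ({a, b} : Set V) := by
  rintro (rfl | rfl)
  exacts [hx.2.1.ne rfl, hx.1 rfl]

theorem eq_of_adj_of_mem_privNeighborSet {x : V} (hx : x ∈ privNeighborSet G a b) :
    ∀ t ∈ ({a, b} : Set V), G.Adj t x → t = a := by
  rintro t (rfl | rfl) htx
  exacts [rfl, absurd htx hx.2.2]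

theorem IsSecureDominating.subsingleton_privNeighborSet (hG : G.IsAcyclic)
    (hS : IsSecureDominating G {a, b}) : (privNeighborSet G a b).Subsingleton :=
  fun _ hx _ hy => hS.eq_of_forall_adj_eq hG (notMem_pair_of_mem_privNeighborSet hx)
    (notMem_pair_of_mem_privNeighborSet hy) (eq_of_adj_of_mem_privNeighborSet hx)
    (eq_of_adj_of_mem_privNeighborSet hy)

theorem mem_privNeighborSet_or_mem_commonNeighbors {z : V} (hza : z ≠ a) (hzb : z ≠ b)
    (h : G.Adj a z ∨ G.Adj b z) :
    z ∈ privNeighborSet G a b ∨ z ∈ privNeighborSet G b a ∨ z ∈ G.commonNeighbors a b := by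
  simp only [privNeighborSet, Set.mem_ofPred_eq, mem_commonNeighbors]
  tauto

theorem eq_of_adj_of_forall_not_adj (hG : G.IsAcyclic)
    (hW : ∀ z, z ≠ a → z ≠ b → G.Adj a z ∨ G.Adj b z)
    (hcross : ∀ x ∈ privNeighborSet G a b, ∀ y ∈ privNeighborSet G b a, ¬G.Adj x y)
    {x z : V} (hx : x ∈ privNeighborSet G a b) (hxz : G.Adj x z) : z = a := by
  by_contra hza
  obtain ⟨hxb, hax, hbx⟩ := hx
  have hzb : z ≠ b := by rintro rfl; exact hbx hxz.symm
  have haz : ¬G.Adj a z := hG.not_adj_of_adj_of_adj hax hxz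
  exact hcross x ⟨hxb, hax, hbx⟩ z ⟨hza, (hW z hza hzb).resolve_left haz, haz⟩ hxz

theorem notMem_commonNeighbors_of_adj (hG : G.IsAcyclic) (hab : a ≠ b) {x₀ y₀ : V}
    (hx₀ : x₀ ∈ privNeighborSet G a b) (hy₀ : y₀ ∈ privNeighborSet G b a) (hxy : G.Adj x₀ y₀)
    (c : V) : c ∉ G.commonNeighbors a b := by
  intro hc
  obtain ⟨hac, hbc⟩ := (G.mem_commonNeighbors).mp hc
  have := congrArg Walk.length <| hG.eq_of_isPath
    (p := .cons hac (.cons hbc.symm .nil))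
    (q := .cons hx₀.2.1 (.cons hxy (.cons hy₀.2.1.symm .nil)))
    (by simp [hac.ne, hbc.ne', hab])
    (by simp [hx₀.2.1.ne, hxy.ne, hy₀.2.1.ne', hy₀.1.symm, hx₀.1, hab])
  simp at this

theorem eq_of_adj_of_adj_of_ne (hG : G.IsAcyclic) (hab : a ≠ b)
    (hW : ∀ z, z ≠ a → z ≠ b → G.Adj a z ∨ G.Adj b z) {x₀ y₀ x z : V}
    (hx₀ : x₀ ∈ privNeighborSet G a b) (hy₀ : y₀ ∈ privNeighborSet G b a) (hxy : G.Adj x₀ y₀)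
    (hx : x ∈ privNeighborSet G a b) (hxx₀ : x ≠ x₀) (hxz : G.Adj x z) : z = a := by
  by_contra hza
  obtain ⟨hxb, hax, hbx⟩ := hx
  have hzb : z ≠ b := by rintro rfl; exact hbx hxz.symm
  have haz : ¬G.Adj a z := hG.not_adj_of_adj_of_adj hax hxz
  have hbz : G.Adj b z := (hW z hza hzb).resolve_left haz
  by_cases hzy₀ : z = y₀
  · subst hzy₀
    exact hxx₀ (hG.subsingleton_commonNeighbors hy₀.1.symm ⟨hax, hxz.symm⟩ ⟨hx₀.2.1, hxy.symm⟩)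
  · have := congrArg Walk.support <| hG.eq_of_isPath
      (p := .cons hax (.cons hxz (.cons hbz.symm .nil)))
      (q := .cons hx₀.2.1 (.cons hxy (.cons hy₀.2.1.symm .nil)))
      (by simp [hax.ne, hxz.ne, hbz.ne', hab, hxb, Ne.symm hza])
      (by simp [hx₀.2.1.ne, hxy.ne, hy₀.2.1.ne', hy₀.1.symm, hx₀.1, hab])
    simp at this
    exact hxx₀ this.1

/-- The shape forced on a secure coalition partition with at least `n - 1` parts: its only pair
`{a, b}` is the coalition partner of every singleton part. -/
def AllTriplesSecure (G : SimpleGraph V) (a b : V) : Prop :=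
  ∀ v, v ≠ a → v ≠ b → IsSecureDominating G {v, a, b}

namespace AllTriplesSecure

theorem symm (H : AllTriplesSecure G a b) : AllTriplesSecure G b a := fun v hvb hva => by
  rw [Set.pair_comm]
  exact H v hva hvb

theorem adj_or_adj_or_adj (H : AllTriplesSecure G a b) {z v : V} (hza : z ≠ a) (hzb : z ≠ b)
    (hva : v ≠ a) (hvb : v ≠ b) (hzv : z ≠ v) : G.Adj a z ∨ G.Adj b z ∨ G.Adj v z := by
  obtain ⟨t, ht, htz⟩ := (H v hva hvb).1 z (by simp [hza, hzb, hzv])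
  rcases ht with rfl | rfl | rfl <;> simp [htz]

end AllTriplesSecure

variable [Fintype V]

theorem exists_notMem_of_card_lt [DecidableEq V] {s : Finset V} (hs : s.card < Fintype.card V) :
    ∃ v, v ∉ s := by
  obtain ⟨v, -, hv⟩ := Finset.exists_mem_notMem_of_card_lt_card (t := Finset.univ) hs
  exact ⟨v, hv⟩

theorem exists_ne_of_five_le_card (hn : 5 ≤ Fintype.card V) (a b c d : V) :
    ∃ v, v ≠ a ∧ v ≠ b ∧ v ≠ c ∧ v ≠ d := by
  classical
  obtain ⟨v, hv⟩ := exists_notMem_of_card_lt (s := {a, b, c, d}) (by grind [Finset.card_le_four])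
  exact ⟨v, by simpa using hv⟩

theorem nonempty_of_forall_mem_or (hn : 5 ≤ Fintype.card V) {X Y Z : Set V}
    (hY : Y.Subsingleton) (hZ : Z.Subsingleton)
    (hcover : ∀ v, v ≠ a → v ≠ b → v ∈ X ∨ v ∈ Y ∨ v ∈ Z) : X.Nonempty := by
  by_contra hX
  have hsub : ({a, b}ᶜ : Set V) ⊆ Y ∪ Z := fun v hv => by
    simp only [Set.mem_compl_iff, Set.mem_insert_iff, Set.mem_singleton_iff, not_or] at hv
    exact (hcover v hv.1 hv.2).resolve_left (fun h => hX ⟨v, h⟩)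
  have hcompl : 3 ≤ ({a, b}ᶜ : Set V).ncard := by
    have hsum := Set.ncard_add_ncard_compl ({a, b} : Set V)
    have hpair := Set.ncard_insert_le a ({b} : Set V)
    rw [Nat.card_eq_fintype_card] at hsum
    rw [Set.ncard_singleton] at hpair
    omega
  have hY₁ := Set.ncard_le_one_iff_subsingleton.mpr hY
  have hZ₁ := Set.ncard_le_one_iff_subsingleton.mpr hZ
  have := (Set.ncard_le_ncard hsub).trans (Set.ncard_union_le Y Z)
  omega

theorem not_isSecureDominating_singleton_s13 (hG : G.IsAcyclic) (hn : 3 ≤ Fintype.card V) (x : V) :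
    ¬IsSecureDominating G {x} := by
  classical
  intro hS
  obtain ⟨u, hu⟩ := exists_notMem_of_card_lt (s := {x}) (by simp; omega)
  obtain ⟨w, hw⟩ := exists_notMem_of_card_lt (s := {x, u}) (by grind [Finset.card_le_two])
  simp only [Finset.mem_singleton, Finset.mem_insert, not_or] at hu hw
  exact hw.2 <| hS.eq_of_forall_adj_eq hG (s := x) (by simpa using hw.1) (by simpa using hu)
    (fun _ ht _ => ht) (fun _ ht _ => ht)

theorem not_isSecureDominating_pair (hG : G.IsAcyclic) (hn : 5 ≤ Fintype.card V) {v w : V}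
    (hvw : v ≠ w) : ¬IsSecureDominating G {v, w} := by
  intro hS
  have hS' : IsSecureDominating G {w, v} := Set.pair_comm v w ▸ hS
  have hA := hS.subsingleton_privNeighborSet hG
  have hB := hS'.subsingleton_privNeighborSet hG
  have hC := hG.subsingleton_commonNeighbors hvw
  have hclass : ∀ z, z ≠ v → z ≠ w →
      z ∈ privNeighborSet G v w ∨ z ∈ privNeighborSet G w v ∨ z ∈ G.commonNeighbors v w := by
    intro z hzv hzw
    refine mem_privNeighborSet_or_mem_commonNeighbors hzv hzw ?_
    obtain ⟨t, ht, htz⟩ := hS.1 z (by simp [hzv, hzw])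
    rcases ht with rfl | rfl <;> simp [htz]
  obtain ⟨x, hx⟩ := nonempty_of_forall_mem_or hn hB hC hclass
  obtain ⟨y, hy⟩ := nonempty_of_forall_mem_or (X := privNeighborSet G w v) hn hA hC
    fun z hzv hzw => by have := hclass z hzv hzw; tauto
  obtain ⟨c, hc⟩ := nonempty_of_forall_mem_or (X := G.commonNeighbors v w) hn hA hB
    fun z hzv hzw => by have := hclass z hzv hzw; tauto
  obtain ⟨hvc, hwc⟩ := (G.mem_commonNeighbors).mp hc
  -- whichever of `v`, `w` defends `c`, its private neighbour is left undominated
  obtain ⟨s, hs, hsc, hdefend⟩ := hS.exists_defender (u := c) (by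
    rintro (rfl | rfl)
    exacts [G.irrefl hvc, G.irrefl hwc])
  rcases hs with rfl | rfl
  · exact hG.not_adj_of_adj_of_adj hsc (hdefend x (notMem_pair_of_mem_privNeighborSet hx)
      (fun h => hx.2.2 (h ▸ hwc)) (eq_of_adj_of_mem_privNeighborSet hx)) hx.2.1
  · rw [Set.pair_comm] at hdefend
    exact hG.not_adj_of_adj_of_adj hsc (hdefend y (notMem_pair_of_mem_privNeighborSet hy)
      (fun h => hy.2.2 (h ▸ hvc)) (eq_of_adj_of_mem_privNeighborSet hy)) hy.2.1

theorem IsSecureDominating.three_le_ncard (hG : G.IsAcyclic) (hn : 5 ≤ Fintype.card V)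
    (hS : IsSecureDominating G S) : 3 ≤ S.ncard := by
  by_contra h
  obtain h0 | h1 | h2 : S.ncard = 0 ∨ S.ncard = 1 ∨ S.ncard = 2 := by omega
  · obtain rfl := (Set.ncard_eq_zero).mp h0
    obtain ⟨v⟩ : Nonempty V := Fintype.card_pos_iff.mp (by omega)
    obtain ⟨u, hu, -⟩ := hS.1 v (Set.notMem_empty v)
    exact Set.notMem_empty u hu
  · obtain ⟨x, rfl⟩ := Set.ncard_eq_one.mp h1
    exact not_isSecureDominating_singleton_s13 hG (by omega) x hS
  · obtain ⟨v, w, hvw, rfl⟩ := Set.ncard_eq_two.mp h2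
    exact not_isSecureDominating_pair hG hn hvw hS

namespace AllTriplesSecure

theorem eq_of_forall_adj_eq (hG : G.IsAcyclic) (hn : 5 ≤ Fintype.card V)
    (H : AllTriplesSecure G a b) {c p q : V} (hpa : p ≠ a) (hpb : p ≠ b) (hqa : q ≠ a)
    (hqb : q ≠ b) (hp : ∀ z, G.Adj p z → z = c) (hq : ∀ z, G.Adj q z → z = c) : p = q := by
  obtain ⟨v, hva, hvb, hvp, hvq⟩ := exists_ne_of_five_le_card hn a b p q
  exact (H v hva hvb).eq_of_forall_adj_eq hG (by simp [hpa, hpb, hvp.symm])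
    (by simp [hqa, hqb, hvq.symm]) (fun t _ h => hp t h.symm) (fun t _ h => hq t h.symm)

theorem nonempty_iso_of_not_adj (hG : G.IsAcyclic) (hn : 5 ≤ Fintype.card V)
    (H : AllTriplesSecure G a b) {u : V} (hua : u ≠ a) (hub : u ≠ b) (hau : ¬G.Adj a u)
    (hbu : ¬G.Adj b u) : Nonempty (G ≃g pathGraph 5) := by
  have hadj_u : ∀ z, z ≠ a → z ≠ b → z ≠ u → G.Adj u z := fun z hza hzb hzu => by
    have := H.adj_or_adj_or_adj hua hub hza hzb (Ne.symm hzu)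
    exact (this.resolve_left hau).resolve_left hbu |>.symm
  have hadj_ab : ∀ z, z ≠ a → z ≠ b → z ≠ u → G.Adj a z ∨ G.Adj b z := by
    intro z hza hzb hzu
    obtain ⟨v, hva, hvb, hvu, hvz⟩ := exists_ne_of_five_le_card hn a b u z
    have hvz' := hG.not_adj_of_adj_of_adj (hadj_u v hva hvb hvu).symm (hadj_u z hza hzb hzu)
    have := H.adj_or_adj_or_adj hza hzb hva hvb (Ne.symm hvz)
    tauto
  have hcover : ∀ z, z ≠ a → z ≠ b →
      z ∈ G.commonNeighbors a u ∨ z ∈ ({u} : Set V) ∨ z ∈ G.commonNeighbors b u := by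
    intro z hza hzb
    by_cases hzu : z = u
    · exact Or.inr (Or.inl hzu)
    · rcases hadj_ab z hza hzb hzu with h | h
      exacts [Or.inl ⟨h, hadj_u z hza hzb hzu⟩, Or.inr (Or.inr ⟨h, hadj_u z hza hzb hzu⟩)]
  have hA := hG.subsingleton_commonNeighbors hua.symm
  have hB := hG.subsingleton_commonNeighbors hub.symm
  obtain ⟨x, hax, hux⟩ := nonempty_of_forall_mem_or hn Set.subsingleton_singleton hB hcover
  obtain ⟨y, hby, huy⟩ := nonempty_of_forall_mem_or (X := G.commonNeighbors b u) hn
    Set.subsingleton_singleton hA (fun z hza hzb => by have := hcover z hza hzb; tauto)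
  refine hG.nonempty_iso_pathGraph_five hn hax (G.adj_symm hux) huy (G.adj_symm hby) fun v => ?_
  by_cases hva : v = a
  · simp [hva]
  by_cases hvb : v = b
  · simp [hvb]
  rcases hcover v hva hvb with h | h | h
  · simp [hA h ⟨hax, hux⟩]
  · simp [Set.mem_singleton_iff.mp h]
  · simp [hB h ⟨hby, huy⟩]

theorem nonempty_iso_of_forall_not_adj (hG : G.IsAcyclic) (hn : 5 ≤ Fintype.card V)
    (hab : a ≠ b) (H : AllTriplesSecure G a b)
    (hW : ∀ z, z ≠ a → z ≠ b → G.Adj a z ∨ G.Adj b z)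
    (hcross : ∀ x ∈ privNeighborSet G a b, ∀ y ∈ privNeighborSet G b a, ¬G.Adj x y) :
    Nonempty (G ≃g pathGraph 5) := by
  have hW' : ∀ z, z ≠ b → z ≠ a → G.Adj b z ∨ G.Adj a z := fun z hzb hza => (hW z hza hzb).symm
  have hcross' : ∀ y ∈ privNeighborSet G b a, ∀ x ∈ privNeighborSet G a b, ¬G.Adj y x :=
    fun y hy x hx hyx => hcross x hx y hy hyx.symm
  have hA : (privNeighborSet G a b).Subsingleton := fun x hx x' hx' =>
    H.eq_of_forall_adj_eq hG hn hx.2.1.ne' hx.1 hx'.2.1.ne' hx'.1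
      (fun _ => eq_of_adj_of_forall_not_adj hG hW hcross hx)
      (fun _ => eq_of_adj_of_forall_not_adj hG hW hcross hx')
  have hB : (privNeighborSet G b a).Subsingleton := fun y hy y' hy' =>
    H.eq_of_forall_adj_eq hG hn hy.1 hy.2.1.ne' hy'.1 hy'.2.1.ne'
      (fun _ => eq_of_adj_of_forall_not_adj hG hW' hcross' hy)
      (fun _ => eq_of_adj_of_forall_not_adj hG hW' hcross' hy')
  have hC := hG.subsingleton_commonNeighbors hab
  have hclass := fun z hza hzb => mem_privNeighborSet_or_mem_commonNeighbors hza hzb (hW z hza hzb)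
  obtain ⟨x, hx⟩ := nonempty_of_forall_mem_or hn hB hC hclass
  obtain ⟨y, hy⟩ := nonempty_of_forall_mem_or (X := privNeighborSet G b a) hn hA hC
    (fun z hza hzb => by have := hclass z hza hzb; tauto)
  obtain ⟨c, hc⟩ := nonempty_of_forall_mem_or (X := G.commonNeighbors a b) hn hA hB
    (fun z hza hzb => by have := hclass z hza hzb; tauto)
  refine hG.nonempty_iso_pathGraph_five hn (G.adj_symm hx.2.1) hc.1 (G.adj_symm hc.2) hy.2.1
    fun v => ?_
  by_cases hva : v = a
  · simp [hva]
  by_cases hvb : v = b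
  · simp [hvb]
  rcases hclass v hva hvb with h | h | h
  · simp [hA h hx]
  · simp [hB h hy]
  · simp [hC h hc]

theorem nonempty_iso_of_adj_of_mem (hG : G.IsAcyclic) (hn : 5 ≤ Fintype.card V)
    (hab : a ≠ b) (H : AllTriplesSecure G a b)
    (hW : ∀ z, z ≠ a → z ≠ b → G.Adj a z ∨ G.Adj b z) {x₀ y₀ x₁ : V}
    (hx₀ : x₀ ∈ privNeighborSet G a b) (hy₀ : y₀ ∈ privNeighborSet G b a) (hxy : G.Adj x₀ y₀)
    (hx₁ : x₁ ∈ privNeighborSet G a b) (hx₁x₀ : x₁ ≠ x₀) : Nonempty (G ≃g pathGraph 5) := by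
  have hW' : ∀ z, z ≠ b → z ≠ a → G.Adj b z ∨ G.Adj a z := fun z hzb hza => (hW z hza hzb).symm
  have hleaf : ∀ x ∈ privNeighborSet G a b, x ≠ x₀ → ∀ z, G.Adj x z → z = a :=
    fun _ hx hxx₀ _ => eq_of_adj_of_adj_of_ne hG hab hW hx₀ hy₀ hxy hx hxx₀
  have hleaf' : ∀ y ∈ privNeighborSet G b a, y ≠ y₀ → ∀ z, G.Adj y z → z = b :=
    fun _ hy hyy₀ _ => eq_of_adj_of_adj_of_ne hG hab.symm hW' hy₀ hx₀ hxy.symm hy hyy₀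
  have hA : ∀ x ∈ privNeighborSet G a b, x ≠ x₀ → x = x₁ := fun x hx hxx₀ =>
    H.eq_of_forall_adj_eq hG hn hx.2.1.ne' hx.1 hx₁.2.1.ne' hx₁.1 (hleaf x hx hxx₀)
      (hleaf x₁ hx₁ hx₁x₀)
  -- in `{x₁, a, b}`, both `y` and `y₀` have `b` as their only neighbour
  have hB : ∀ y ∈ privNeighborSet G b a, y = y₀ := by
    intro y hy
    by_contra hyy₀
    have hne : ∀ y ∈ privNeighborSet G b a, y ≠ x₁ := fun y hy h => hy.2.2 (h ▸ hx₁.2.1)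
    refine hyy₀ <| (H x₁ hx₁.2.1.ne' hx₁.1).eq_of_forall_adj_eq hG (s := b)
      (by simp [hy.1, hy.2.1.ne', hne y hy]) (by simp [hy₀.1, hy₀.2.1.ne', hne y₀ hy₀])
      (fun t _ h => hleaf' y hy hyy₀ t h.symm) ?_
    rintro t (rfl | rfl | rfl) h
    · exact absurd (hleaf t hx₁ hx₁x₀ y₀ h) hy₀.1
    · exact absurd h hy₀.2.2
    · rfl
  refine hG.nonempty_iso_pathGraph_five hn (G.adj_symm hx₁.2.1) hx₀.2.1 hxy (G.adj_symm hy₀.2.1)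
    fun v => ?_
  by_cases hva : v = a
  · simp [hva]
  by_cases hvb : v = b
  · simp [hvb]
  rcases mem_privNeighborSet_or_mem_commonNeighbors hva hvb (hW v hva hvb) with h | h | h
  · by_cases hvx₀ : v = x₀
    · simp [hvx₀]
    · simp [hA v h hvx₀]
  · simp [hB v h]
  · exact absurd h (notMem_commonNeighbors_of_adj hG hab hx₀ hy₀ hxy v)

theorem nonempty_iso_of_adj (hG : G.IsAcyclic) (hn : 5 ≤ Fintype.card V)
    (hab : a ≠ b) (H : AllTriplesSecure G a b)
    (hW : ∀ z, z ≠ a → z ≠ b → G.Adj a z ∨ G.Adj b z) {x₀ y₀ : V}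
    (hx₀ : x₀ ∈ privNeighborSet G a b) (hy₀ : y₀ ∈ privNeighborSet G b a) (hxy : G.Adj x₀ y₀) :
    Nonempty (G ≃g pathGraph 5) := by
  obtain ⟨v, hva, hvb, hvx₀, hvy₀⟩ := exists_ne_of_five_le_card hn a b x₀ y₀
  rcases mem_privNeighborSet_or_mem_commonNeighbors hva hvb (hW v hva hvb) with h | h | h
  · exact H.nonempty_iso_of_adj_of_mem hG hn hab hW hx₀ hy₀ hxy h hvx₀
  · exact H.symm.nonempty_iso_of_adj_of_mem hG hn hab.symm (fun z hzb hza => (hW z hza hzb).symm)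
      hy₀ hx₀ hxy.symm h hvy₀
  · exact absurd h (notMem_commonNeighbors_of_adj hG hab hx₀ hy₀ hxy v)

theorem nonempty_iso (hG : G.IsAcyclic) (hn : 5 ≤ Fintype.card V) (hab : a ≠ b)
    (H : AllTriplesSecure G a b) : Nonempty (G ≃g pathGraph 5) := by
  by_cases hU : ∃ u, u ≠ a ∧ u ≠ b ∧ ¬G.Adj a u ∧ ¬G.Adj b u
  · obtain ⟨u, hua, hub, hau, hbu⟩ := hU
    exact H.nonempty_iso_of_not_adj hG hn hua hub hau hbu
  have hW : ∀ z, z ≠ a → z ≠ b → G.Adj a z ∨ G.Adj b z := fun z hza hzb => by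
    by_contra h
    exact hU ⟨z, hza, hzb, not_or.mp h⟩
  by_cases hcross : ∃ x ∈ privNeighborSet G a b, ∃ y ∈ privNeighborSet G b a, G.Adj x y
  · obtain ⟨x, hx, y, hy, hxy⟩ := hcross
    exact H.nonempty_iso_of_adj hG hn hab hW hx hy hxy
  · exact H.nonempty_iso_of_forall_not_adj hG hn hab hW fun x hx y hy hxy =>
      hcross ⟨x, hx, y, hy, hxy⟩

end AllTriplesSecure

theorem sum_ncard_eq_card_of_isPartition {π : Finset (Set V)}
    (hπ : Setoid.IsPartition (π : Set (Set V))) : ∑ A ∈ π, A.ncard = Fintype.card V := by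
  have := hπ.ncard_eq_finsum Set.univ
  rw [Set.ncard_univ, Nat.card_eq_fintype_card, finsum_eq_sum_of_fintype] at this
  rw [this, ← Finset.sum_coe_sort π]
  simp

theorem ncard_add_ncard_add_card_le_of_isPartition {π : Finset (Set V)}
    (hπ : Setoid.IsPartition (π : Set (Set V))) {A B : Set V} (hA : A ∈ π) (hB : B ∈ π)
    (hAB : A ≠ B) : A.ncard + B.ncard + π.card ≤ Fintype.card V + 2 := by
  classical
  have hB' : B ∈ π.erase A := Finset.mem_erase.mpr ⟨hAB.symm, hB⟩
  have hrest := Finset.card_nsmul_le_sum ((π.erase A).erase B) (fun C => C.ncard) 1 fun C hC =>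
    (Set.ncard_pos).mpr (Setoid.nonempty_of_mem_partition hπ
      (Finset.mem_of_mem_erase (Finset.mem_of_mem_erase hC)))
  rw [← sum_ncard_eq_card_of_isPartition hπ, ← Finset.add_sum_erase π _ hA,
    ← Finset.add_sum_erase _ _ hB']
  rw [Finset.card_erase_of_mem hB', Finset.card_erase_of_mem hA, smul_eq_mul, mul_one] at hrest
  have : 2 ≤ π.card := Finset.one_lt_card.mpr ⟨A, hA, B, hB, hAB⟩
  omega

theorem IsSecPartition.ncard_add_ncard_le {π : Finset (Set V)} (hπ : IsSecPartition G π)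
    (hcard : Fintype.card V ≤ π.card + 1) {A B : Set V} (hA : A ∈ π) (hB : B ∈ π)
    (hAB : A ≠ B) : A.ncard + B.ncard ≤ 3 := by
  have := ncard_add_ncard_add_card_le_of_isPartition hπ.1 hA hB hAB
  omega

theorem IsSecPartition.exists_partner (hG : G.IsAcyclic) (hn : 5 ≤ Fintype.card V)
    {π : Finset (Set V)} (hπ : IsSecPartition G π) (hcard : Fintype.card V ≤ π.card + 1)
    {A : Set V} (hA : A ∈ π) :
    ∃ B ∈ π, B ≠ A ∧ IsSecureDominating G (A ∪ B) ∧ A.ncard + B.ncard = 3 := by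
  rcases hπ.2 A hA with ⟨v, rfl, -, hS⟩ | ⟨-, B, hB, hBA, hS⟩
  · simpa using hS.three_le_ncard hG hn
  · exact ⟨B, hB, hBA, hS, le_antisymm (hπ.ncard_add_ncard_le hcard hA hB hBA.symm)
      ((hS.three_le_ncard hG hn).trans (Set.ncard_union_le A B))⟩

theorem IsSecPartition.exists_allTriplesSecure (hG : G.IsAcyclic) (hn : 5 ≤ Fintype.card V)
    {π : Finset (Set V)} (hπ : IsSecPartition G π) (hcard : Fintype.card V ≤ π.card + 1) :
    ∃ a b, a ≠ b ∧ AllTriplesSecure G a b := by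
  have hpos : ∀ A ∈ π, 1 ≤ A.ncard := fun A hA =>
    (Set.ncard_pos).mpr (Setoid.nonempty_of_mem_partition hπ.1 hA)
  have hpartOf : ∀ v, ∃ A ∈ π, v ∈ A := fun v => by
    obtain ⟨A, ⟨hA, hvA⟩, -⟩ := hπ.1.2 v
    exact ⟨A, hA, hvA⟩
  obtain ⟨v₀⟩ : Nonempty V := Fintype.card_pos_iff.mp (by omega)
  obtain ⟨A₀, hA₀, -⟩ := hpartOf v₀
  obtain ⟨B₀, hB₀, -, -, h₃⟩ := hπ.exists_partner hG hn hcard hA₀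
  obtain ⟨P, hP, hP₂⟩ : ∃ P ∈ π, P.ncard = 2 := by
    by_cases h : A₀.ncard = 2
    · exact ⟨A₀, hA₀, h⟩
    · exact ⟨B₀, hB₀, by have := hpos A₀ hA₀; have := hpos B₀ hB₀; omega⟩
  obtain ⟨a, b, hab, rfl⟩ := Set.ncard_eq_two.mp hP₂
  refine ⟨a, b, hab, fun v hva hvb => ?_⟩
  obtain ⟨A, hA, hvA⟩ := hpartOf v
  have hAP : A ≠ {a, b} := by
    rintro rfl
    rcases hvA with rfl | rfl
    exacts [hva rfl, hvb rfl]
  have hA₁ : A = {v} := by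
    have := hπ.ncard_add_ncard_le hcard hA hP hAP
    exact Set.eq_singleton_iff_unique_mem.mpr
      ⟨hvA, fun w hw => (Set.ncard_le_one_iff).mp (by omega) hw hvA⟩
  obtain ⟨B, hB, -, hS, h₃⟩ := hπ.exists_partner hG hn hcard hA
  have hBP : B = {a, b} := by
    by_contra hBP
    have := hπ.ncard_add_ncard_le hcard hB hP hBP
    rw [hA₁, Set.ncard_singleton] at h₃
    omega
  rwa [hA₁, hBP, Set.singleton_union] at hS

end SecCoal

theorem stmt13 {V : Type*} [Fintype V] (T : SimpleGraph V) (hT : T.IsTree)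
    (hn : 5 ≤ Fintype.card V) (hP : IsEmpty (T ≃g SimpleGraph.pathGraph 5)) :
    SEC T ≤ Fintype.card V - 2 := by
  refine csSup_le' ?_
  rintro k ⟨π, hπ, rfl⟩
  by_contra hk
  obtain ⟨a, b, hab, H⟩ := hπ.exists_allTriplesSecure hT.isAcyclic hn (by omega)
  exact (H.nonempty_iso hT.isAcyclic hn hab).elim hP.false
end
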